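/- arXiv:0807.0848 — 2 statements merged into one kernel-verified Lean document; each statement's English description precedes it below -/
import Mathlib

section
/- Let A : [λ⁻¹, λ] → Sym_n(ℝ) be a C¹ family of symmetric matrices such that λ⁻¹|ξ|² ≤ A(t)ξ·ξ ≤ λ|ξ|² and A'(t)ξ·ξ ≥ F|ξ|² for all t and ξ. Then for all s, t in [λ⁻¹, λ] with s ≤ t and every ξ ∈ ℝⁿ, (A(s)⁻¹ − A(t)⁻¹)ξ·ξ ≥ F λ⁻⁴ (t − s) |ξ|². -/
/-!
Write `B = A(s)`, `C = A(t)` and `η = C⁻¹ξ`. Since `B⁻¹ξ·ξ = max_ζ (2 ξ·ζ − Bζ·ζ)`, taking `ζ = η`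
gives `(B⁻¹ − C⁻¹)ξ·ξ ≥ (C − B)η·η`, and the mean value theorem applied to `τ ↦ A(τ)η·η`
bounds the right side below by `F (t − s)|η|²`. Finally `|ξ| = |Cη| ≤ λ|η|`, by the
Cauchy–Schwarz inequality for the form of `C`.
-/

open Matrix

theorem dotProduct_self_nonneg {ι R : Type*} [Fintype ι] [CommRing R] [LinearOrder R]
    [IsStrictOrderedRing R] (v : ι → R) : 0 ≤ v ⬝ᵥ v :=
  Finset.sum_nonneg fun _ _ => mul_self_nonneg _

namespace Matrix

variable {ι : Type*} [Fintype ι]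

theorem PosDef.of_le_mulVec_dotProduct {M : Matrix ι ι ℝ} (hM : M.IsSymm) {c : ℝ} (hc : 0 < c)
    (hle : ∀ x, c * (x ⬝ᵥ x) ≤ M *ᵥ x ⬝ᵥ x) : M.PosDef := by
  refine .of_dotProduct_mulVec_pos (isHermitian_iff_isSymm.mpr hM) fun x hx => ?_
  rw [star_trivial, dotProduct_comm]
  have hx' : 0 < x ⬝ᵥ x := star_trivial x ▸ dotProduct_star_self_pos_iff.mpr hx
  exact (mul_pos hc hx').trans_le (hle x)

theorem PosSemidef.sq_mulVec_dotProduct_le {M : Matrix ι ι ℝ} (hM : M.PosSemidef)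
    (x y : ι → ℝ) : (M *ᵥ x ⬝ᵥ y) ^ 2 ≤ (M *ᵥ x ⬝ᵥ x) * (M *ᵥ y ⬝ᵥ y) := by
  -- Cauchy–Schwarz in the inner product `⟪x, y⟫ = My·x` induced by `M`
  let _ := M.toSeminormedAddCommGroup hM
  let _ := M.toInnerProductSpace hM
  have h := real_inner_mul_inner_self_le y x
  change (M *ᵥ x ⬝ᵥ star y) * (M *ᵥ x ⬝ᵥ star y) ≤
    (M *ᵥ y ⬝ᵥ star y) * (M *ᵥ x ⬝ᵥ star x) at h
  simpa only [star_trivial, sq, mul_comm (M *ᵥ y ⬝ᵥ y)] using h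

theorem PosSemidef.mulVec_dotProduct_mulVec_le {M : Matrix ι ι ℝ} (hM : M.PosSemidef) {c : ℝ}
    (hc : ∀ x, M *ᵥ x ⬝ᵥ x ≤ c * (x ⬝ᵥ x)) (x : ι → ℝ) :
    M *ᵥ x ⬝ᵥ M *ᵥ x ≤ c ^ 2 * (x ⬝ᵥ x) := by
  have hnonneg : ∀ y, 0 ≤ M *ᵥ y ⬝ᵥ y := fun y => by
    simpa [dotProduct_comm] using hM.dotProduct_mulVec_nonneg y
  set y := M *ᵥ x
  have key : (y ⬝ᵥ y) * (y ⬝ᵥ y) ≤ (y ⬝ᵥ y) * (c ^ 2 * (x ⬝ᵥ x)) := by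
    have := (hM.sq_mulVec_dotProduct_le x y).trans <|
      mul_le_mul (hc x) (hc y) (hnonneg y) ((hnonneg x).trans (hc x))
    linarith
  rcases (dotProduct_self_nonneg y).eq_or_lt with hy | hy
  · exact hy ▸ mul_nonneg (sq_nonneg c) (dotProduct_self_nonneg x)
  · exact le_of_mul_le_mul_left key hy

section Inverse

variable [DecidableEq ι]

theorem PosDef.two_mul_dotProduct_sub_le_inv_mulVec_dotProduct {B : Matrix ι ι ℝ}
    (hB : B.PosDef) (ξ η : ι → ℝ) : 2 * (ξ ⬝ᵥ η) - B *ᵥ η ⬝ᵥ η ≤ B⁻¹ *ᵥ ξ ⬝ᵥ ξ := by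
  set u := B⁻¹ *ᵥ ξ
  have hu : B *ᵥ u = ξ := by
    rw [mulVec_mulVec, mul_nonsing_inv _ ((isUnit_iff_isUnit_det B).mp hB.isUnit), one_mulVec]
  have hsymm : B *ᵥ η ⬝ᵥ u = η ⬝ᵥ ξ := by
    rw [← vecMul_transpose, (isHermitian_iff_isSymm.mp hB.1).eq, ← dotProduct_mulVec, hu]
  -- `B(u − η)·(u − η) = B⁻¹ξ·ξ − 2 ξ·η + Bη·η`
  have := hB.posSemidef.dotProduct_mulVec_nonneg (u - η)
  rw [star_trivial, mulVec_sub, hu, dotProduct_sub, sub_dotProduct, sub_dotProduct,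
    dotProduct_comm u (B *ᵥ η), hsymm, dotProduct_comm η (B *ᵥ η)] at this
  linarith [dotProduct_comm u ξ, dotProduct_comm η ξ]

theorem PosDef.sub_mulVec_dotProduct_le_inv_sub_inv {B C : Matrix ι ι ℝ}
    (hB : B.PosDef) (hC : IsUnit C.det) (ξ : ι → ℝ) :
    (C - B) *ᵥ (C⁻¹ *ᵥ ξ) ⬝ᵥ C⁻¹ *ᵥ ξ ≤ (B⁻¹ - C⁻¹) *ᵥ ξ ⬝ᵥ ξ := by
  have hCη : C *ᵥ (C⁻¹ *ᵥ ξ) = ξ := by rw [mulVec_mulVec, mul_nonsing_inv _ hC, one_mulVec]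
  have := hB.two_mul_dotProduct_sub_le_inv_mulVec_dotProduct ξ (C⁻¹ *ᵥ ξ)
  rw [sub_mulVec, sub_dotProduct, hCη, sub_mulVec, sub_dotProduct, dotProduct_comm (C⁻¹ *ᵥ ξ)]
  linarith

end Inverse

theorem hasDerivAt_mulVec_dotProduct {m n : Type*} [Fintype m] [Fintype n]
    {A : ℝ → Matrix m n ℝ} {A' : Matrix m n ℝ} {t : ℝ}
    (hA : ∀ i j, HasDerivAt (fun s => A s i j) (A' i j) t) (x : n → ℝ) (y : m → ℝ) :
    HasDerivAt (fun s => A s *ᵥ x ⬝ᵥ y) (A' *ᵥ x ⬝ᵥ y) t := by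
  simp only [dotProduct, mulVec]
  exact .fun_sum fun i _ => (HasDerivAt.fun_sum fun j _ => (hA i j).mul_const (x j)).mul_const (y i)

theorem mul_sub_le_sub_mulVec_dotProduct {D : Set ℝ} (hD : Convex ℝ D)
    {A A' : ℝ → Matrix ι ι ℝ} (hA : ∀ t ∈ D, ∀ i j, HasDerivAt (fun s => A s i j) (A' t i j) t)
    {F : ℝ} {x : ι → ℝ} (hA' : ∀ t ∈ D, F * (x ⬝ᵥ x) ≤ A' t *ᵥ x ⬝ᵥ x)
    {s t : ℝ} (hs : s ∈ D) (ht : t ∈ D) (hst : s ≤ t) :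
    F * (t - s) * (x ⬝ᵥ x) ≤ (A t - A s) *ᵥ x ⬝ᵥ x := by
  have hq := fun τ hτ => hasDerivAt_mulVec_dotProduct (hA τ hτ) x x
  have := hD.mul_sub_le_image_sub_of_le_deriv
    (fun τ hτ => (hq τ hτ).continuousAt.continuousWithinAt)
    (fun τ hτ => (hq τ (interior_subset hτ)).differentiableAt.differentiableWithinAt)
    (fun τ hτ => (hq τ (interior_subset hτ)).deriv ▸ hA' τ (interior_subset hτ)) s hs t ht hst
  rw [sub_mulVec, sub_dotProduct]
  linarith

end Matrix

/-- Monotonicity of the inverse of a C¹ monotone family of symmetric elliptic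
matrices: `(A(s)⁻¹ − A(t)⁻¹)ξ·ξ ≥ F λ⁻⁴ (t − s)|ξ|²` for `s ≤ t`. -/
theorem inverse_matrix_monotonicity
    (n : ℕ) (lam F : ℝ) (hlam : 1 ≤ lam) (hF : 0 < F)
    (A A' : ℝ → Matrix (Fin n) (Fin n) ℝ)
    (hsym : ∀ t ∈ Set.Icc lam⁻¹ lam, (A t).IsSymm)
    (hderiv : ∀ t ∈ Set.Icc lam⁻¹ lam, ∀ i j,
      HasDerivAt (fun s => A s i j) (A' t i j) t)
    (hell : ∀ t ∈ Set.Icc lam⁻¹ lam, ∀ ξ : Fin n → ℝ,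
      lam⁻¹ * (ξ ⬝ᵥ ξ) ≤ (A t).mulVec ξ ⬝ᵥ ξ ∧
      (A t).mulVec ξ ⬝ᵥ ξ ≤ lam * (ξ ⬝ᵥ ξ))
    (hmono : ∀ t ∈ Set.Icc lam⁻¹ lam, ∀ ξ : Fin n → ℝ,
      F * (ξ ⬝ᵥ ξ) ≤ (A' t).mulVec ξ ⬝ᵥ ξ) :
    ∀ s ∈ Set.Icc lam⁻¹ lam, ∀ t ∈ Set.Icc lam⁻¹ lam, s ≤ t →
      ∀ ξ : Fin n → ℝ,
        F * (lam ^ 4)⁻¹ * (t - s) * (ξ ⬝ᵥ ξ) ≤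
          ((A s)⁻¹ - (A t)⁻¹).mulVec ξ ⬝ᵥ ξ := by
  intro s hs t ht hst ξ
  have hlam₀ : 0 < lam := one_pos.trans_le hlam
  have hpos : ∀ τ ∈ Set.Icc lam⁻¹ lam, (A τ).PosDef := fun τ hτ =>
    PosDef.of_le_mulVec_dotProduct (hsym τ hτ) (inv_pos.mpr hlam₀) fun x => (hell τ hτ x).1
  have hdet : IsUnit (A t).det := (isUnit_iff_isUnit_det _).mp (hpos t ht).isUnit
  set η := (A t)⁻¹ *ᵥ ξ
  have hξη : ξ ⬝ᵥ ξ ≤ lam ^ 2 * (η ⬝ᵥ η) := by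
    have hAη : A t *ᵥ η = ξ := by rw [mulVec_mulVec, mul_nonsing_inv _ hdet, one_mulVec]
    exact hAη ▸ (hpos t ht).posSemidef.mulVec_dotProduct_mulVec_le (fun x => (hell t ht x).2) η
  have hkey : F * (t - s) * (η ⬝ᵥ η) ≤ ((A s)⁻¹ - (A t)⁻¹) *ᵥ ξ ⬝ᵥ ξ :=
    (mul_sub_le_sub_mulVec_dotProduct (convex_Icc _ _) hderiv (hmono · · η) hs ht hst).trans
      ((hpos s hs).sub_mulVec_dotProduct_le_inv_sub_inv hdet ξ)
  have hts : 0 ≤ t - s := sub_nonneg.mpr hst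
  calc F * (lam ^ 4)⁻¹ * (t - s) * (ξ ⬝ᵥ ξ)
      ≤ F * (lam ^ 4)⁻¹ * (t - s) * (lam ^ 2 * (η ⬝ᵥ η)) := by gcongr
    _ = F * (t - s) * (η ⬝ᵥ η) * (lam ^ 2)⁻¹ := by field_simp
    _ ≤ F * (t - s) * (η ⬝ᵥ η) :=
      mul_le_of_le_one_right (by have := dotProduct_self_nonneg η; positivity)
        (inv_le_one_of_one_le₀ (one_le_pow₀ hlam))
    _ ≤ ((A s)⁻¹ - (A t)⁻¹) *ᵥ ξ ⬝ᵥ ξ := hkey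
end

section
/- Let Ω ⊂ ℝⁿ be a bounded Lipschitz domain partitioned (up to measure zero) into finitely many Lipschitz subdomains A₁, …, A_N, and let h : Ω → ℝ be such that h|_{Ā_j} is real-analytic for each j and h is continuous on Ω̄. Suppose Ω is connected, Ā₁ ∩ ∂Ω contains a nonempty open portion Γ of ∂Ω, and the chain condition holds: the subdomains can be ordered so that Ā_j ∩ Ā_{j+1} has nonempty interior relative to a common (n−1)-dimensional interface. If h together with all its derivatives of every order vanishes on Γ, and at each interface the vanishing of h and its derivatives propagates (i.e. analytic continuation across interfaces holds), then h ≡ 0 in Ω. -/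
open MeasureTheory Filter Topology Set

/-!
A real-analytic function all of whose derivatives vanish at a point is zero near that point, by
its Taylor expansion. The identity principle then makes `h` vanish on the connected neighbourhood
`U 0`, and the overlaps of consecutive neighbourhoods carry this along the chain to every `U j`.
Hence `h` vanishes on the union of the subdomains, which misses only a null set of the open set
`Ω`; a function continuous on `Ω` vanishing almost everywhere on `Ω` vanishes on all of `Ω`.
-/

theorem AnalyticAt.eventuallyEq_zero_of_iteratedFDeriv_eq_zero {𝕜 E F : Type*}
    [NontriviallyNormedField 𝕜] [CharZero 𝕜] [NormedAddCommGroup E] [NormedSpace 𝕜 E]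
    [NormedAddCommGroup F] [NormedSpace 𝕜 F] [CompleteSpace F] {f : E → F} {x : E}
    (hf : AnalyticAt 𝕜 f x) (hder : ∀ k, iteratedFDeriv 𝕜 k f x = 0) : f =ᶠ[𝓝 x] 0 := by
  obtain ⟨p, r, hp⟩ := hf
  filter_upwards [Metric.eball_mem_nhds x hp.r_pos] with y hy
  have hsum := hp.hasSum_iteratedFDeriv (y := y - x) (by simpa [edist_eq_enorm_sub] using hy)
  simp only [hder, zero_apply, smul_zero, add_sub_cancel] at hsum
  exact hsum.unique hasSum_zero

theorem eqOn_zero_of_analyticOnNhd_chain {𝕜 E F : Type*} [NontriviallyNormedField 𝕜]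
    [NormedAddCommGroup E] [NormedSpace 𝕜 E] [NormedAddCommGroup F] [NormedSpace 𝕜 F]
    {f : E → F} {N : ℕ} {U : ℕ → Set E}
    (hopen : ∀ j < N, IsOpen (U j)) (hconn : ∀ j < N, IsPreconnected (U j))
    (hf : ∀ j < N, AnalyticOnNhd 𝕜 f (U j))
    (hchain : ∀ j, j + 1 < N → (U j ∩ U (j + 1)).Nonempty)
    {x₀ : E} (hx₀ : x₀ ∈ U 0) (hfx₀ : f =ᶠ[𝓝 x₀] 0) :
    ∀ j < N, EqOn f 0 (U j) := by
  intro j hj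
  induction j with
  | zero => exact (hf 0 hj).eqOn_zero_of_preconnected_of_eventuallyEq_zero (hconn 0 hj) hx₀ hfx₀
  | succ k ih =>
    obtain ⟨z, hzk, hzk₁⟩ := hchain k hj
    have hfz : f =ᶠ[𝓝 z] 0 := mem_of_superset ((hopen k (by omega)).mem_nhds hzk) (ih (by omega))
    exact (hf (k + 1) hj).eqOn_zero_of_preconnected_of_eventuallyEq_zero (hconn (k + 1) hj) hzk₁ hfz

theorem IsOpen.eqOn_of_eqOn_of_measure_diff_eq_zero {X Y : Type*} [TopologicalSpace X]
    [MeasurableSpace X] [OpensMeasurableSpace X] [TopologicalSpace Y] [T2Space Y]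
    {μ : Measure X} [μ.IsOpenPosMeasure] {f g : X → Y} {U S : Set X} (hU : IsOpen U)
    (hf : ContinuousOn f U) (hg : ContinuousOn g U) (hfg : EqOn f g S) (hnull : μ (U \ S) = 0) :
    EqOn f g U := by
  refine Measure.eqOn_open_of_ae_eq (μ := μ) ?_ hU hf hg
  refine (ae_restrict_iff' hU.measurableSet).2 (measure_mono_null (fun x hx => ?_) hnull)
  obtain ⟨hxU, hfgx⟩ : x ∈ U ∧ f x ≠ g x := by simpa using hx
  exact ⟨hxU, fun hxS => hfgx (hfg hxS)⟩

theorem piecewise_analytic_unique_continuation_general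
    (n : ℕ) (Ω : Set (EuclideanSpace ℝ (Fin n)))
    (hΩ_open : IsOpen Ω)
    (h : EuclideanSpace ℝ (Fin n) → ℝ)
    (hcont : ContinuousOn h (closure Ω))
    (N : ℕ) (hN : 0 < N)
    (A U : ℕ → Set (EuclideanSpace ℝ (Fin n)))
    -- the subdomains cover Ω up to measure zero:
    (hcover : volume (Ω \ ⋃ j ∈ Finset.range N, A j) = 0)
    -- h extends real-analytically to a connected open neighborhood of each Ā_j:
    (hU_open : ∀ j < N, IsOpen (U j))
    (hU_conn : ∀ j < N, IsPreconnected (U j))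
    (hU_nbhd : ∀ j < N, closure (A j) ⊆ U j)
    (hanalytic : ∀ j < N, AnalyticOnNhd ℝ h (U j))
    -- Γ is a nonempty relatively open portion of ∂Ω contained in Ā₀:
    (Γ : Set (EuclideanSpace ℝ (Fin n))) (hΓ_ne : Γ.Nonempty)
    (hΓU : Γ ⊆ U 0)
    -- h and all its derivatives vanish on Γ:
    (hvanish : ∀ x ∈ Γ, ∀ k : ℕ, iteratedFDeriv ℝ k h x = 0)
    -- the chain condition: consecutive neighborhoods overlap:
    (hchain : ∀ j, j + 1 < N → (U j ∩ U (j + 1)).Nonempty) :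
    ∀ x ∈ Ω, h x = 0 := by
  obtain ⟨x₀, hx₀⟩ := hΓ_ne
  have hnear : h =ᶠ[𝓝 x₀] 0 :=
    (hanalytic 0 hN x₀ (hΓU hx₀)).eventuallyEq_zero_of_iteratedFDeriv_eq_zero (hvanish x₀ hx₀)
  have hU_zero := eqOn_zero_of_analyticOnNhd_chain hU_open hU_conn hanalytic hchain (hΓU hx₀) hnear
  have hA_zero : EqOn h 0 (⋃ j ∈ Finset.range N, A j) := by
    simp only [EqOn, mem_iUnion, Finset.mem_range]
    rintro x ⟨j, hj, hx⟩
    exact hU_zero j hj (hU_nbhd j hj (subset_closure hx))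
  exact hΩ_open.eqOn_of_eqOn_of_measure_diff_eq_zero (hcont.mono subset_closure)
    continuousOn_const hA_zero hcover

/-- Piecewise-analytic propagation of smallness: if `Ω` is partitioned (up to
measure zero) into finitely many subdomains `A j` on each of which `h` is
real-analytic (i.e. analytic on a connected open neighborhood `U j` of the
closure of `A j`), `h` is continuous on `Ω̄`, `h` and all its derivatives
vanish on a nonempty relatively open portion `Γ` of `∂Ω` touching the first
subdomain, and consecutive neighborhoods overlap (analytic continuation
across the interfaces), then `h ≡ 0` in `Ω`. -/
theorem piecewise_analytic_unique_continuation
    (n : ℕ) (Ω : Set (EuclideanSpace ℝ (Fin n)))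
    (hΩ_open : IsOpen Ω) (hΩ_conn : IsConnected Ω)
    (hΩ_bdd : Bornology.IsBounded Ω)
    (h : EuclideanSpace ℝ (Fin n) → ℝ)
    (hcont : ContinuousOn h (closure Ω))
    (N : ℕ) (hN : 0 < N)
    (A U : ℕ → Set (EuclideanSpace ℝ (Fin n)))
    -- the subdomains cover Ω up to measure zero:
    (hcover : volume (Ω \ ⋃ j ∈ Finset.range N, A j) = 0)
    (hA_sub : ∀ j < N, A j ⊆ Ω)
    -- h extends real-analytically to a connected open neighborhood of each Ā_j:
    (hU_open : ∀ j < N, IsOpen (U j))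
    (hU_conn : ∀ j < N, IsPreconnected (U j))
    (hU_nbhd : ∀ j < N, closure (A j) ⊆ U j)
    (hanalytic : ∀ j < N, AnalyticOnNhd ℝ h (U j))
    -- Γ is a nonempty relatively open portion of ∂Ω contained in Ā₀:
    (Γ : Set (EuclideanSpace ℝ (Fin n))) (hΓ_ne : Γ.Nonempty)
    (hΓ_open : ∃ V, IsOpen V ∧ Γ = V ∩ frontier Ω)
    (hΓ_sub : Γ ⊆ closure (A 0)) (hΓU : Γ ⊆ U 0)
    -- h and all its derivatives vanish on Γ:
    (hvanish : ∀ x ∈ Γ, ∀ k : ℕ, iteratedFDeriv ℝ k h x = 0)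
    -- the chain condition: consecutive neighborhoods overlap:
    (hchain : ∀ j, j + 1 < N → (U j ∩ U (j + 1)).Nonempty) :
    ∀ x ∈ Ω, h x = 0 :=
  piecewise_analytic_unique_continuation_general n Ω hΩ_open h hcont N hN A U hcover hU_open hU_conn
    hU_nbhd hanalytic Γ hΓ_ne hΓU hvanish hchain
end
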